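/- arXiv:1812.02962 — 4 statements merged into one kernel-verified Lean document; each statement's English description precedes it below -/
import Mathlib

section
/- Under the ε-decay random sampling scheme with t_0 = 2·C_0·K, C_0 ≥ 10, and T > (t_0+1)²/e² − 1, the number n_k of random samples allocated to any fixed arm k up to time T satisfies C_0(1 + log(T+1) − log(t_0+1)) ≤ n_k ≤ 3·C_0(1 + log T − log t_0) with probability at least 1 − 2/(T+1). -/
/-!
The count `∑ t ∈ Icc 1 T, X t` is a sum of independent Bernoulli variables, so its moment
generating function is at most `exp ((e^λ - 1) P)`, where `P = (1 / K) ∑ min 1 (t₀ / t)` is its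
mean. Comparing the tail `∑_{t > ⌊t₀⌋} 1 / t` of the harmonic series with logarithms shows
that `P` is at least twice the lower threshold minus `1` and at most two thirds of the upper
threshold plus `1 / 20`. Chernoff's bound at `λ = -log 2` and at `λ = 2 / 5` then bounds each
tail by `exp (-log (T + 1))`, since the assumption on `T` forces both thresholds to be at least
`5 log (T + 1)`.
-/

open MeasureTheory ProbabilityTheory Real Finset

section Chernoff

variable {Ω ι : Type*} [MeasurableSpace Ω] {μ : Measure Ω} [IsProbabilityMeasure μ]

lemma mgf_eq_of_mem_zero_one {Y : Ω → ℝ} (hY : Measurable Y) (hval : ∀ ω, Y ω = 0 ∨ Y ω = 1)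
    (l : ℝ) : mgf Y μ l = 1 + (exp l - 1) * μ.real {ω | Y ω = 1} := by
  have hexp : (fun ω => exp (l * Y ω)) =
      fun ω => 1 + {ω | Y ω = 1}.indicator (fun _ => exp l - 1) ω := by
    funext ω
    rcases hval ω with h | h <;> simp [h]
  have hs : MeasurableSet {ω | Y ω = 1} := hY (measurableSet_singleton 1)
  rw [mgf, hexp, integral_add (integrable_const 1) ((integrable_const _).indicator hs),
    integral_indicator_const _ hs]
  simp [mul_comm]

lemma integrable_exp_mul_of_mem_zero_one {Y : Ω → ℝ} (hY : Measurable Y)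
    (hval : ∀ ω, Y ω = 0 ∨ Y ω = 1) (l : ℝ) : Integrable (fun ω => exp (l * Y ω)) μ := by
  refine .of_bound (by fun_prop) (exp |l|) (ae_of_all _ fun ω => ?_)
  rw [norm_of_nonneg (exp_pos _).le, exp_le_exp]
  rcases hval ω with h | h <;> simp [h, le_abs_self]

lemma one_sub_sub_le_measureReal_and (f : Ω → ℝ) (a b : ℝ) :
    1 - μ.real {ω | f ω ≤ a} - μ.real {ω | b ≤ f ω} ≤ μ.real {ω | a ≤ f ω ∧ f ω ≤ b} := by
  have hcover : Set.univ ⊆ ({ω | f ω ≤ a} ∪ {ω | b ≤ f ω}) ∪ {ω | a ≤ f ω ∧ f ω ≤ b} := by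
    intro ω _
    simp only [Set.mem_union, Set.mem_ofPred_eq]
    by_contra! h
    linarith [h.2 h.1.1.le, h.1.2]
  have := (measureReal_mono (μ := μ) hcover).trans ((measureReal_union_le _ _).trans
    (add_le_add_left (measureReal_union_le _ _) _))
  rw [probReal_univ] at this
  linarith

variable {X : ι → Ω → ℝ}

lemma mgf_sum_le_exp (hmeas : ∀ i, Measurable (X i)) (hindep : iIndepFun X μ)
    (hval : ∀ i ω, X i ω = 0 ∨ X i ω = 1) (s : Finset ι) (l : ℝ) :
    mgf (fun ω => ∑ i ∈ s, X i ω) μ l ≤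
      exp ((exp l - 1) * ∑ i ∈ s, μ.real {ω | X i ω = 1}) := by
  have hsum : (fun ω => ∑ i ∈ s, X i ω) = ∑ i ∈ s, X i := by ext; simp
  rw [hsum, hindep.mgf_sum hmeas, mul_sum, exp_sum]
  refine prod_le_prod (fun i _ => mgf_nonneg) fun i _ => ?_
  rw [mgf_eq_of_mem_zero_one (hmeas i) (hval i), add_comm]
  exact add_one_le_exp _

lemma measureReal_sum_le_le_exp (hmeas : ∀ i, Measurable (X i)) (hindep : iIndepFun X μ)
    (hval : ∀ i ω, X i ω = 0 ∨ X i ω = 1) (s : Finset ι) {l : ℝ} (hl : 0 ≤ l) (a : ℝ) :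
    μ.real {ω | ∑ i ∈ s, X i ω ≤ a} ≤
      exp (l * a + (exp (-l) - 1) * ∑ i ∈ s, μ.real {ω | X i ω = 1}) := by
  have hint := hindep.integrable_exp_mul_sum hmeas (s := s) (t := -l)
    fun i _ => integrable_exp_mul_of_mem_zero_one (hmeas i) (hval i) _
  simp only [Finset.sum_apply] at hint
  calc _ ≤ exp (-(-l) * a) * mgf (fun ω => ∑ i ∈ s, X i ω) μ (-l) :=
        measure_le_le_exp_mul_mgf a (neg_nonpos.2 hl) hint
    _ ≤ _ := by
        rw [neg_neg, exp_add]
        gcongr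
        exact mgf_sum_le_exp hmeas hindep hval s _

lemma measureReal_le_sum_le_exp (hmeas : ∀ i, Measurable (X i)) (hindep : iIndepFun X μ)
    (hval : ∀ i ω, X i ω = 0 ∨ X i ω = 1) (s : Finset ι) {l : ℝ} (hl : 0 ≤ l) (a : ℝ) :
    μ.real {ω | a ≤ ∑ i ∈ s, X i ω} ≤
      exp (-l * a + (exp l - 1) * ∑ i ∈ s, μ.real {ω | X i ω = 1}) := by
  have hint := hindep.integrable_exp_mul_sum hmeas (s := s) (t := l)
    fun i _ => integrable_exp_mul_of_mem_zero_one (hmeas i) (hval i) _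
  simp only [Finset.sum_apply] at hint
  calc _ ≤ exp (-l * a) * mgf (fun ω => ∑ i ∈ s, X i ω) μ l :=
        measure_ge_le_exp_mul_mgf a hl hint
    _ ≤ _ := by
        rw [exp_add]
        gcongr
        exact mgf_sum_le_exp hmeas hindep hval s _

lemma exp_two_fifths_lt : exp (2 / 5) < 1.492 := by
  have h5 : exp (2 / 5) ^ 5 = exp 1 ^ 2 := by
    rw [← exp_nat_mul, ← exp_nat_mul]; norm_num
  have he : exp 1 ^ 2 < 1.492 ^ 5 := by
    nlinarith [exp_one_lt_d9, exp_pos 1]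
  exact (pow_lt_pow_iff_left₀ (exp_pos _).le (by norm_num) (by norm_num)).1 (h5 ▸ he)

lemma measureReal_sum_le_le_exp_of_two_mul_sub_one_le (hmeas : ∀ i, Measurable (X i))
    (hindep : iIndepFun X μ) (hval : ∀ i ω, X i ω = 0 ∨ X i ω = 1) (s : Finset ι) {a : ℝ}
    (ha : 2 * a - 1 ≤ ∑ i ∈ s, μ.real {ω | X i ω = 1}) :
    μ.real {ω | ∑ i ∈ s, X i ω ≤ a} ≤ exp (-(1 - log 2) * a + 1 / 2) := by
  refine (measureReal_sum_le_le_exp hmeas hindep hval s (log_nonneg one_le_two) a).trans ?_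
  rw [exp_neg, exp_log two_pos, exp_le_exp]
  linarith

lemma measureReal_le_sum_le_exp_of_le_two_thirds_mul (hmeas : ∀ i, Measurable (X i))
    (hindep : iIndepFun X μ) (hval : ∀ i ω, X i ω = 0 ∨ X i ω = 1) (s : Finset ι) {a : ℝ}
    (ha : ∑ i ∈ s, μ.real {ω | X i ω = 1} ≤ 2 / 3 * a + 1 / 20) :
    μ.real {ω | a ≤ ∑ i ∈ s, X i ω} ≤ exp (-a / 14 + 1 / 40) := by
  refine (measureReal_le_sum_le_exp hmeas hindep hval s (l := 2 / 5) (by norm_num) a).trans ?_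
  have hP : 0 ≤ ∑ i ∈ s, μ.real {ω | X i ω = 1} := sum_nonneg fun _ _ => measureReal_nonneg
  have he := exp_two_fifths_lt
  have he' : 1 ≤ exp (2 / 5) := one_le_exp (by norm_num)
  rw [exp_le_exp]
  nlinarith [mul_le_mul_of_nonneg_left ha (sub_nonneg.2 he'),
    mul_le_mul_of_nonneg_right he.le hP]

lemma one_sub_two_mul_exp_le_measureReal_sum_mem (hmeas : ∀ i, Measurable (X i))
    (hindep : iIndepFun X μ) (hval : ∀ i ω, X i ω = 0 ∨ X i ω = 1) (s : Finset ι) {A a b : ℝ}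
    (hA : 1 ≤ A) (ha : 5 * A ≤ a) (hb : 15 * A ≤ b)
    (hlow : 2 * a - 1 ≤ ∑ i ∈ s, μ.real {ω | X i ω = 1})
    (hupp : ∑ i ∈ s, μ.real {ω | X i ω = 1} ≤ 2 / 3 * b + 1 / 20) :
    1 - 2 * exp (-A) ≤ μ.real {ω | a ≤ ∑ i ∈ s, X i ω ∧ ∑ i ∈ s, X i ω ≤ b} := by
  have hlowexp : exp (-(1 - log 2) * a + 1 / 2) ≤ exp (-A) := by
    rw [exp_le_exp]
    nlinarith [log_two_lt_d9]
  have huppexp : exp (-b / 14 + 1 / 40) ≤ exp (-A) := by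
    rw [exp_le_exp]
    linarith
  linarith [one_sub_sub_le_measureReal_and (μ := μ) (fun ω => ∑ i ∈ s, X i ω) a b,
    measureReal_sum_le_le_exp_of_two_mul_sub_one_le hmeas hindep hval s hlow,
    measureReal_le_sum_le_exp_of_le_two_thirds_mul hmeas hindep hval s hupp]

end Chernoff

lemma log_add_one_sub_log_le_inv {x : ℝ} (hx : 0 < x) : log (x + 1) - log x ≤ x⁻¹ := by
  have h := log_le_sub_one_of_pos (div_pos (by linarith : 0 < x + 1) hx)
  rw [log_div (by linarith) hx.ne'] at h
  field_simp at h ⊢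
  linarith

lemma inv_le_log_sub_log_sub_one {x : ℝ} (hx : 1 < x) : x⁻¹ ≤ log x - log (x - 1) := by
  have h := one_sub_inv_le_log_of_pos (div_pos (by linarith : 0 < x) (by linarith : 0 < x - 1))
  rw [log_div (by linarith) (by linarith), inv_div] at h
  field_simp at h ⊢
  linarith

lemma log_add_one_sub_log_add_one_le_sum_Ioc_inv {m T : ℕ} (h : m ≤ T) :
    log (T + 1) - log (m + 1) ≤ ∑ t ∈ Ioc m T, (t : ℝ)⁻¹ := by
  induction T, h using Nat.le_induction with
  | base => simp
  | succ n hn ih =>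
    have := log_add_one_sub_log_le_inv (by positivity : (0 : ℝ) < n + 1)
    rw [sum_Ioc_succ_top (by omega)]
    push_cast
    linarith

lemma sum_Ioc_inv_le_log_sub_log {m T : ℕ} (hm : 0 < m) (h : m ≤ T) :
    ∑ t ∈ Ioc m T, (t : ℝ)⁻¹ ≤ log T - log m := by
  induction T, h using Nat.le_induction with
  | base => simp
  | succ n hn ih =>
    have hn1 : (1 : ℝ) < n + 1 := by
      have : (0 : ℝ) < n := by exact_mod_cast hm.trans_le hn
      linarith
    have := inv_le_log_sub_log_sub_one hn1
    rw [add_sub_cancel_right] at this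
    rw [sum_Ioc_succ_top (by omega)]
    push_cast
    linarith

lemma sum_Icc_min_one_div_eq {t0 : ℝ} (ht0 : 0 ≤ t0) {T : ℕ} (h : ⌊t0⌋₊ ≤ T) :
    ∑ t ∈ Icc 1 T, min 1 (t0 / t) = ⌊t0⌋₊ + t0 * ∑ t ∈ Ioc ⌊t0⌋₊ T, (t : ℝ)⁻¹ := by
  rw [← zero_add 1, Icc_add_one_left_eq_Ioc, ← sum_Ioc_consecutive _ (Nat.zero_le _) h, mul_sum]
  congr 1
  · rw [sum_congr rfl fun t ht => min_eq_left ?_]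
    · simp
    · have ht := mem_Ioc.1 ht
      have htpos : (0 : ℝ) < t := by exact_mod_cast ht.1
      rw [one_le_div htpos]
      exact (Nat.cast_le.2 ht.2).trans (Nat.floor_le ht0)
  · refine sum_congr rfl fun t ht => ?_
    have ht0t : t0 < t := by
      have := Nat.lt_floor_add_one t0
      have : ((⌊t0⌋₊ + 1 : ℕ) : ℝ) ≤ t := Nat.cast_le.2 (mem_Ioc.1 ht).1
      push_cast at this
      linarith
    rw [min_eq_right ((div_le_one (ht0.trans_lt ht0t)).2 ht0t.le), div_eq_mul_inv]

lemma sub_one_le_sum_Icc_min_one_div {t0 : ℝ} (ht0 : 0 ≤ t0) {T : ℕ} (h : ⌊t0⌋₊ ≤ T) :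
    t0 * (1 + log (T + 1) - log (t0 + 1)) - 1 ≤ ∑ t ∈ Icc 1 T, min 1 (t0 / t) := by
  have hharm := log_add_one_sub_log_add_one_le_sum_Ioc_inv h
  have hfloor := Nat.lt_floor_add_one t0
  have hlog : log (⌊t0⌋₊ + 1) ≤ log (t0 + 1) :=
    log_le_log (by positivity) (by linarith [Nat.floor_le ht0])
  rw [sum_Icc_min_one_div_eq ht0 h]
  nlinarith

lemma sum_Icc_min_one_div_le {t0 : ℝ} (ht0 : 1 ≤ t0) {T : ℕ} (h : ⌊t0⌋₊ ≤ T) :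
    ∑ t ∈ Icc 1 T, min 1 (t0 / t) ≤ t0 * (1 + log T - log t0) + (⌊t0⌋₊ : ℝ)⁻¹ := by
  set m := ⌊t0⌋₊
  have hm : 0 < m := Nat.floor_pos.2 ht0
  have hmpos : (0 : ℝ) < m := by exact_mod_cast hm
  have hm_le : (m : ℝ) ≤ t0 := Nat.floor_le (by linarith)
  have hm_lt : t0 < m + 1 := Nat.lt_floor_add_one t0
  have hharm := sum_Ioc_inv_le_log_sub_log hm h
  have hlog := log_le_sub_one_of_pos (div_pos (by linarith : 0 < t0) hmpos)
  rw [log_div (by linarith) hmpos.ne'] at hlog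
  -- the left side is `(t0 - m) ^ 2 / m`, the price of cutting the harmonic sum at `m` not `t0`
  have hsq : t0 * (t0 / m - 1) + (m - t0) ≤ (m : ℝ)⁻¹ := by
    rw [div_sub_one hmpos.ne', mul_div_assoc', ← sub_nonneg]
    field_simp
    nlinarith
  rw [sum_Icc_min_one_div_eq (by linarith) h]
  nlinarith

lemma sub_one_le_sum_Icc_min_one_div_div {t0 K : ℝ} (ht0 : 0 ≤ t0) (hK : 1 ≤ K) {T : ℕ}
    (h : ⌊t0⌋₊ ≤ T) :
    t0 / K * (1 + log (T + 1) - log (t0 + 1)) - 1 ≤ ∑ t ∈ Icc 1 T, min 1 (t0 / t) / K := by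
  have := sub_one_le_sum_Icc_min_one_div ht0 h
  rw [← sum_div, le_div_iff₀ (by linarith), sub_mul, div_mul_eq_mul_div,
    div_mul_cancel₀ _ (by linarith)]
  linarith

lemma sum_Icc_min_one_div_div_le {t0 K : ℝ} (ht0 : 20 ≤ t0) (hK : 1 ≤ K) {T : ℕ}
    (h : ⌊t0⌋₊ ≤ T) :
    ∑ t ∈ Icc 1 T, min 1 (t0 / t) / K ≤ t0 / K * (1 + log T - log t0) + 1 / 20 := by
  have := sum_Icc_min_one_div_le (by linarith) h
  have hm : (20 : ℝ) ≤ ⌊t0⌋₊ := by exact_mod_cast Nat.le_floor (by exact_mod_cast ht0)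
  have hm' : (⌊t0⌋₊ : ℝ)⁻¹ ≤ 1 / 20 := by rw [inv_eq_one_div]; gcongr
  rw [← sum_div, div_le_iff₀ (by linarith), add_mul, div_mul_eq_mul_div,
    div_mul_cancel₀ _ (by linarith)]
  nlinarith

lemma self_le_sq_div_exp_one_sq {x : ℝ} (hx : 8 ≤ x) : x ≤ x ^ 2 / exp 1 ^ 2 := by
  have he2 : exp 1 ^ 2 < 8 := by nlinarith [exp_one_lt_d9, exp_pos 1]
  rw [le_div_iff₀ (by positivity)]
  nlinarith

lemma log_div_two_le_one_add_log_sub_log {x y : ℝ} (hx : 0 < x) (h : x ^ 2 / exp 1 ^ 2 ≤ y) :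
    log y / 2 ≤ 1 + log y - log x := by
  have := log_le_log (by positivity) h
  rw [log_div (by positivity) (by positivity), log_pow, log_pow, log_exp] at this
  push_cast at this
  linarith

lemma log_add_one_sub_log_add_one_le_log_sub_log {x y : ℝ} (hx : 0 < x) (hxy : x ≤ y) :
    log (y + 1) - log (x + 1) ≤ log y - log x := by
  have : log ((y + 1) / y) ≤ log ((x + 1) / x) := by
    refine log_le_log (div_pos (by linarith) (by linarith)) ?_
    rw [div_le_div_iff₀ (by linarith) hx]
    nlinarith
  rw [log_div (by linarith) (by linarith), log_div (by linarith) hx.ne'] at this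
  linarith

/-- Under the ε-decay random sampling scheme with `t₀ = 2 C₀ K`, `C₀ ≥ 10`, and
`T > (t₀+1)²/e² − 1`, the number of random samples `n_k = ∑_{t=1}^T X_t` of a fixed arm
satisfies `C₀(1 + log(T+1) − log(t₀+1)) ≤ n_k ≤ 3C₀(1 + log T − log t₀)` with probability
at least `1 − 2/(T+1)`. -/
theorem stmt_3 {Ω : Type*} [MeasurableSpace Ω] (μ : Measure Ω) [IsProbabilityMeasure μ]
    (T K : ℕ) (hK : 0 < K) (C0 t0 : ℝ) (hC0 : 10 ≤ C0) (ht0 : t0 = 2 * C0 * K)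
    (hT : (T : ℝ) > (t0 + 1) ^ 2 / Real.exp 1 ^ 2 - 1)
    (X : ℕ → Ω → ℝ)
    (hmeas : ∀ t, Measurable (X t))
    (hindep : iIndepFun X μ)
    (hval : ∀ t ω, X t ω = 0 ∨ X t ω = 1)
    (hprob : ∀ t ∈ Finset.Icc 1 T,
      μ {ω | X t ω = 1} = ENNReal.ofReal (min 1 (t0 / t) / K)) :
    1 - 2 / ((T : ℝ) + 1) ≤
      (μ {ω | C0 * (1 + Real.log (T + 1) - Real.log (t0 + 1)) ≤ ∑ t ∈ Finset.Icc 1 T, X t ω ∧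
              ∑ t ∈ Finset.Icc 1 T, X t ω ≤ 3 * C0 * (1 + Real.log T - Real.log t0)}).toReal := by
  set A := log ((T : ℝ) + 1)
  set β := 1 + A - log (t0 + 1)
  set α := 1 + log (T : ℝ) - log t0
  have hK1 : (1 : ℝ) ≤ K := by exact_mod_cast hK
  have ht0_20 : 20 ≤ t0 := by rw [ht0]; nlinarith
  have hT_gt : t0 < T := by linarith [self_le_sq_div_exp_one_sq (by linarith : (8 : ℝ) ≤ t0 + 1)]
  have hfloor : ⌊t0⌋₊ ≤ T := Nat.floor_le_of_le hT_gt.le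
  have hA : 1 ≤ A := by
    rw [le_log_iff_exp_le (by positivity)]
    linarith [exp_one_lt_three]
  have hβ : A / 2 ≤ β := log_div_two_le_one_add_log_sub_log (by linarith) (by linarith)
  have hαβ : β ≤ α := by
    linarith [log_add_one_sub_log_add_one_le_log_sub_log (by linarith) hT_gt.le]
  have ht0K : t0 / K = 2 * C0 := by rw [ht0]; field_simp
  have hmean : ∑ t ∈ Icc 1 T, μ.real {ω | X t ω = 1} = ∑ t ∈ Icc 1 T, min 1 (t0 / t) / K :=
    sum_congr rfl fun t ht => by
      rw [measureReal_def, hprob t ht, ENNReal.toReal_ofReal (by positivity)]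
  have hlow : 2 * (C0 * β) - 1 ≤ ∑ t ∈ Icc 1 T, μ.real {ω | X t ω = 1} := by
    have := sub_one_le_sum_Icc_min_one_div_div (by linarith) hK1 hfloor
    rw [ht0K, ← hmean] at this
    linarith
  have hupp : ∑ t ∈ Icc 1 T, μ.real {ω | X t ω = 1} ≤ 2 / 3 * (3 * C0 * α) + 1 / 20 := by
    have := sum_Icc_min_one_div_div_le ht0_20 hK1 hfloor
    rw [ht0K, ← hmean] at this
    linarith
  have hconc := one_sub_two_mul_exp_le_measureReal_sum_mem hmeas hindep hval (Icc 1 T) hA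
    (a := C0 * β) (b := 3 * C0 * α) (by nlinarith) (by nlinarith) hlow hupp
  rw [exp_neg, exp_log (by positivity)] at hconc
  rw [← measureReal_def]
  convert hconc using 2
  ring
end

section
/- Let L: R^d → R be convex and differentiable, λ > 0, and let β̂ minimize L(β) + λ‖β‖_1. Let β* ∈ R^d have support S (i.e., β*_j = 0 for j ∉ S). If ‖∇L(β*)‖_∞ < λ/2, then ‖β̂_{S^c} − β*_{S^c}‖_1 ≤ 3‖β̂_S − β*_S‖_1. -/
/-!
With `Δ = β̂ - β*`, convexity gives `L β̂ - L β* ≥ ∇L(β*) Δ ≥ -(λ/2) ‖Δ‖₁` (Hölder with the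
sup-norm bound on the gradient), so optimality of `β̂` against `β*` yields
`‖β̂‖₁ - ‖β*‖₁ ≤ ‖Δ‖₁ / 2`. Since `β*` vanishes off `S`, the triangle inequality gives
`‖β̂‖₁ - ‖β*‖₁ ≥ ‖Δ_{Sᶜ}‖₁ - ‖Δ_S‖₁`, and comparing the two bounds gives the cone condition.
-/

open Finset

theorem ConvexOn.apply_sub_le_of_hasFDerivAt {E : Type*} [NormedAddCommGroup E]
    [NormedSpace ℝ E] {s : Set E} {f : E → ℝ} {f' : E →L[ℝ] ℝ} {x y : E} (hf : ConvexOn ℝ s f)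
    (hx : x ∈ s) (hy : y ∈ s) (hf' : HasFDerivAt f f' x) :
    f' (y - x) ≤ f y - f x := by
  let line : ℝ →ᵃ[ℝ] E := AffineMap.lineMap x y
  have hderiv : HasDerivAt (f ∘ line) (f' (y - x)) 0 :=
    HasFDerivAt.comp_hasDerivAt (x := 0) (by simpa [line] using hf') AffineMap.hasDerivAt_lineMap
  simpa [line, slope_def_field] using
    (hf.comp_affineMap line).le_slope_of_hasDerivAt (x := 0) (y := 1)
      (by simpa [line] using hx) (by simpa [line] using hy) one_pos hderiv

theorem LinearMap.abs_apply_le_mul_sum_abs {ι : Type*} [Fintype ι] [DecidableEq ι]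
    (f : (ι → ℝ) →ₗ[ℝ] ℝ) {c : ℝ} (hc : ∀ i, |f (Pi.single i 1)| ≤ c) (v : ι → ℝ) :
    |f v| ≤ c * ∑ i, |v i| := by
  have hexpand : f v = ∑ i, v i * f (Pi.single i 1) := by
    conv_lhs => rw [← univ_sum_single v, map_sum]
    refine sum_congr rfl fun i _ => ?_
    rw [← smul_eq_mul, ← map_smul, ← Pi.single_smul', smul_eq_mul, mul_one]
  calc |f v| ≤ ∑ i, |v i| * |f (Pi.single i 1)| := by
        rw [hexpand]
        simpa only [abs_mul] using abs_sum_le_sum_abs (fun i => v i * f (Pi.single i 1)) univ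
    _ ≤ ∑ i, |v i| * c := by gcongr with i; exact hc i
    _ = c * ∑ i, |v i| := by rw [← sum_mul, mul_comm]

theorem sum_abs_add_sum_compl_abs_sub_le {ι : Type*} [Fintype ι] [DecidableEq ι]
    {S : Finset ι} {x : ι → ℝ} (hx : ∀ j ∉ S, x j = 0) (y : ι → ℝ) :
    ∑ i, |x i| + ∑ j ∈ Sᶜ, |y j - x j| ≤ ∑ i, |y i| + ∑ j ∈ S, |y j - x j| := by
  rw [← sum_add_sum_compl S (fun i => |x i|), ← sum_add_sum_compl S (fun i => |y i|)]
  have hx_compl : ∑ j ∈ Sᶜ, |x j| = 0 :=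
    sum_eq_zero fun j hj => by rw [hx j (mem_compl.mp hj), abs_zero]
  have hy_compl : ∑ j ∈ Sᶜ, |y j - x j| = ∑ j ∈ Sᶜ, |y j| :=
    sum_congr rfl fun j hj => by rw [hx j (mem_compl.mp hj), sub_zero]
  have hS : ∑ j ∈ S, |x j| ≤ ∑ j ∈ S, |y j| + ∑ j ∈ S, |y j - x j| := by
    rw [← sum_add_distrib]
    gcongr with j
    linarith [abs_sub_abs_le_abs_sub (x j) (y j), abs_sub_comm (x j) (y j)]
  linarith

/-- Cone condition for the Lasso: if `β̂` minimizes `L(β) + lam ‖β‖₁` for a convex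
differentiable `L`, `β*` is supported on `S`, and `‖∇L(β*)‖_∞ < lam/2`, then
`‖β̂_{Sᶜ} − β*_{Sᶜ}‖₁ ≤ 3 ‖β̂_S − β*_S‖₁`. -/
theorem stmt_10 (d : ℕ) (L : (Fin d → ℝ) → ℝ) (lam : ℝ) (hlam : 0 < lam)
    (hconv : ConvexOn ℝ Set.univ L) (hdiff : Differentiable ℝ L)
    (βhat βstar : Fin d → ℝ) (S : Finset (Fin d))
    (hsupp : ∀ j ∉ S, βstar j = 0)
    (hmin : ∀ β : Fin d → ℝ,
      L βhat + lam * ∑ i, |βhat i| ≤ L β + lam * ∑ i, |β i|)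
    (hgrad : ∀ i, |fderiv ℝ L βstar (Pi.single i 1)| < lam / 2) :
    ∑ j ∈ Sᶜ, |βhat j - βstar j| ≤ 3 * ∑ j ∈ S, |βhat j - βstar j| := by
  set g := fderiv ℝ L βstar
  have hsubgrad : g (βhat - βstar) ≤ L βhat - L βstar :=
    hconv.apply_sub_le_of_hasFDerivAt (Set.mem_univ _) (Set.mem_univ _) (hdiff βstar).hasFDerivAt
  have hpairing : |g (βhat - βstar)| ≤ lam / 2 * ∑ i, |βhat i - βstar i| :=
    g.toLinearMap.abs_apply_le_mul_sum_abs (fun i => (hgrad i).le) _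
  rw [← sum_add_sum_compl S] at hpairing
  have hl1 := sum_abs_add_sum_compl_abs_sub_le hsupp βhat
  have hopt := hmin βstar
  have hscaled : lam * (∑ j ∈ Sᶜ, |βhat j - βstar j| - 3 * ∑ j ∈ S, |βhat j - βstar j|) ≤ 0 := by
    nlinarith [neg_abs_le (g (βhat - βstar))]
  linarith [nonpos_of_mul_nonpos_right hscaled hlam]
end

section
/- Let f: R → R be three times differentiable with |f'''| ≤ σ₃, let x_1,...,x_n ∈ R^d with ‖x_j‖_∞ ≤ x_max, and define L(β) = (1/n)∑_j f(x_j^T β) (for fixed responses absorbed into f). Then for any β, ξ, u ∈ R^d supported on a set S of size at most s with ξ on the segment between β and β+u, ‖(∇²L(ξ) − ∇²L(β))·u‖_∞ ≤ σ₃·s·x_max³·‖u‖_2². -/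
/-- Hessian perturbation bound: with `L(β) = (1/n) ∑_j f(x_jᵀβ)`, `|f'''| ≤ σ₃`,
`‖x_j‖_∞ ≤ x_max`, and `β, ξ, u` supported on a set `S` of size at most `s` with `ξ` on the
segment from `β` to `β + u`, every coordinate of `(∇²L(ξ) − ∇²L(β)) u` is bounded by
`σ₃ s x_max³ ‖u‖₂²`. -/
theorem stmt_12 (n d s : ℕ) (hn : 0 < n) (f : ℝ → ℝ) (σ3 xmax : ℝ)
    (hf : ContDiff ℝ 3 f)
    (hf3 : ∀ t : ℝ, |deriv (deriv (deriv f)) t| ≤ σ3)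
    (x : Fin n → Fin d → ℝ) (hx : ∀ j i, |x j i| ≤ xmax)
    (S : Finset (Fin d)) (hS : S.card ≤ s)
    (β ξ u : Fin d → ℝ)
    (hβ : ∀ i ∉ S, β i = 0) (hξ : ∀ i ∉ S, ξ i = 0) (hu : ∀ i ∉ S, u i = 0)
    (hseg : ξ ∈ segment ℝ β (β + u)) :
    ∀ i : Fin d,
      |(1 / n) * ∑ j, (deriv (deriv f) (∑ k, x j k * ξ k) -
          deriv (deriv f) (∑ k, x j k * β k)) * x j i * (∑ k, x j k * u k)| ≤
        σ3 * s * xmax ^ 3 * (∑ k, u k ^ 2) := by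
  intro i
  have hσ3 : 0 ≤ σ3 := (abs_nonneg _).trans (hf3 0)
  have hxm : 0 ≤ xmax := (abs_nonneg _).trans (hx ⟨0, hn⟩ i)
  -- differentiability of the second derivative
  have hdg : Differentiable ℝ (deriv (deriv f)) := by
    have h3 : ContDiff ℝ ((2 : ℕ) + 1) f := by exact_mod_cast hf
    have h2 : ContDiff ℝ 2 (deriv f) := (contDiff_succ_iff_deriv.mp h3).2.2
    have h2' : ContDiff ℝ ((1 : ℕ) + 1) (deriv f) := by exact_mod_cast h2
    have h1 : ContDiff ℝ 1 (deriv (deriv f)) := (contDiff_succ_iff_deriv.mp h2').2.2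
    exact h1.differentiable one_ne_zero
  -- Lipschitz bound for the second derivative
  have hlip : ∀ a b : ℝ, |deriv (deriv f) a - deriv (deriv f) b| ≤ σ3 * |a - b| := by
    intro a b
    have := Convex.norm_image_sub_le_of_norm_deriv_le (f := deriv (deriv f))
      (fun t (_ : t ∈ Set.univ) => (hdg t)) (fun t _ => by
        simpa [Real.norm_eq_abs] using hf3 t) convex_univ
      (Set.mem_univ b) (Set.mem_univ a)
    simpa [Real.norm_eq_abs] using this
  set A : ℝ := ∑ k ∈ S, |u k| with hA
  have hA0 : 0 ≤ A := Finset.sum_nonneg fun k _ => abs_nonneg _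
  -- bound for sums against supported vectors
  have hsum : ∀ (v : Fin d → ℝ), (∀ k ∉ S, v k = 0) → ∀ j,
      |∑ k, x j k * v k| ≤ xmax * ∑ k ∈ S, |v k| := by
    intro v hv j
    have he : ∑ k, x j k * v k = ∑ k ∈ S, x j k * v k :=
      (Finset.sum_subset (Finset.subset_univ S) (fun k _ hk => by simp [hv k hk])).symm
    rw [he, Finset.mul_sum]
    refine (Finset.abs_sum_le_sum_abs _ _).trans (Finset.sum_le_sum fun k _ => ?_)
    rw [abs_mul]
    exact mul_le_mul_of_nonneg_right (hx j k) (abs_nonneg _)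
  -- ξ = β + b • u on the segment
  obtain ⟨a, b, ha, hb, hab, heq⟩ := hseg
  have hb1 : b ≤ 1 := by linarith
  have hξk : ∀ k, ξ k = β k + b * u k := by
    intro k
    have h1 : a * β k + b * (β k + u k) = ξ k := congrFun heq k
    linear_combination (-1 : ℝ) * h1 + β k * hab
  have hdiff : ∀ j, (∑ k, x j k * ξ k) - (∑ k, x j k * β k) = b * ∑ k, x j k * u k := by
    intro j
    simp only [hξk]
    rw [Finset.mul_sum, ← Finset.sum_sub_distrib]
    congr 1; ext k; ring
  -- per-term bound
  have hterm : ∀ j, |(deriv (deriv f) (∑ k, x j k * ξ k) -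
      deriv (deriv f) (∑ k, x j k * β k)) * x j i * (∑ k, x j k * u k)| ≤
      σ3 * xmax ^ 3 * A ^ 2 := by
    intro j
    have h1 : |(∑ k, x j k * ξ k) - (∑ k, x j k * β k)| ≤ xmax * A := by
      rw [hdiff j, abs_mul, abs_of_nonneg hb]
      calc b * |∑ k, x j k * u k| ≤ 1 * (xmax * A) := by
            exact mul_le_mul hb1 (hsum u hu j) (abs_nonneg _) zero_le_one
        _ = xmax * A := one_mul _
    have h2 : |deriv (deriv f) (∑ k, x j k * ξ k) -
        deriv (deriv f) (∑ k, x j k * β k)| ≤ σ3 * (xmax * A) :=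
      (hlip _ _).trans (mul_le_mul_of_nonneg_left h1 hσ3)
    have h3 : |∑ k, x j k * u k| ≤ xmax * A := hsum u hu j
    rw [abs_mul, abs_mul]
    calc |deriv (deriv f) (∑ k, x j k * ξ k) - deriv (deriv f) (∑ k, x j k * β k)|
          * |x j i| * |∑ k, x j k * u k|
        ≤ (σ3 * (xmax * A)) * xmax * (xmax * A) := by
          apply mul_le_mul _ h3 (abs_nonneg _) (by positivity)
          exact mul_le_mul h2 (hx j i) (abs_nonneg _) (by positivity)
      _ = σ3 * xmax ^ 3 * A ^ 2 := by ring
  -- Cauchy–Schwarz step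
  have hA2 : A ^ 2 ≤ (s : ℝ) * ∑ k, u k ^ 2 := by
    have h1 : A ^ 2 ≤ (S.card : ℝ) * ∑ k ∈ S, |u k| ^ 2 := by
      exact_mod_cast sq_sum_le_card_mul_sum_sq (s := S) (f := fun k => |u k|)
    have h2 : ∑ k ∈ S, |u k| ^ 2 ≤ ∑ k, u k ^ 2 := by
      simp only [sq_abs]
      exact Finset.sum_le_sum_of_subset_of_nonneg (Finset.subset_univ S)
        (fun k _ _ => sq_nonneg _)
    calc A ^ 2 ≤ (S.card : ℝ) * ∑ k ∈ S, |u k| ^ 2 := h1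
      _ ≤ (s : ℝ) * ∑ k, u k ^ 2 := by
          apply mul_le_mul (by exact_mod_cast hS) h2
            (Finset.sum_nonneg fun k _ => sq_nonneg _) (Nat.cast_nonneg _)
  -- combine
  have hfinal : |∑ j, (deriv (deriv f) (∑ k, x j k * ξ k) -
      deriv (deriv f) (∑ k, x j k * β k)) * x j i * (∑ k, x j k * u k)| ≤
      n * (σ3 * xmax ^ 3 * A ^ 2) := by
    refine (Finset.abs_sum_le_sum_abs _ _).trans ?_
    calc ∑ j, |(deriv (deriv f) (∑ k, x j k * ξ k) -
          deriv (deriv f) (∑ k, x j k * β k)) * x j i * (∑ k, x j k * u k)|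
        ≤ ∑ _j : Fin n, σ3 * xmax ^ 3 * A ^ 2 := Finset.sum_le_sum fun j _ => hterm j
      _ = n * (σ3 * xmax ^ 3 * A ^ 2) := by
          simp [Finset.sum_const, nsmul_eq_mul]
  have hn' : (0 : ℝ) < n := by exact_mod_cast hn
  rw [abs_mul]
  have h1n : |(1 : ℝ) / n| = 1 / n := abs_of_pos (by positivity)
  rw [h1n]
  calc (1 / (n : ℝ)) * |∑ j, (deriv (deriv f) (∑ k, x j k * ξ k) -
        deriv (deriv f) (∑ k, x j k * β k)) * x j i * (∑ k, x j k * u k)|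
      ≤ (1 / n) * (n * (σ3 * xmax ^ 3 * A ^ 2)) := by
        exact mul_le_mul_of_nonneg_left hfinal (by positivity)
    _ = σ3 * xmax ^ 3 * A ^ 2 := by field_simp
    _ ≤ σ3 * xmax ^ 3 * ((s : ℝ) * ∑ k, u k ^ 2) := by
        exact mul_le_mul_of_nonneg_left hA2 (by positivity)
    _ = σ3 * s * xmax ^ 3 * (∑ k, u k ^ 2) := by ring
end

section
/- Let g: R → R be differentiable with |g'| ≤ σ₂ (where g = −log of a density as a function of the linear predictor), and suppose the reward R has conditional density e^{−g(r | x^Tβ)} in r, with |R| ≤ R_max almost surely. Then for any two parameter vectors β₁, β₂ and covariate x with ‖x‖_∞ ≤ x_max: |E[R | x, β₁] − E[R | x, β₂]| ≤ R_max · e^{σ₂ x_max ‖β₁ − β₂‖_1} · σ₂ x_max ‖β₁ − β₂‖_1. -/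
open MeasureTheory

lemma aux_abs_exp_sub_one (t : ℝ) : |Real.exp t - 1| ≤ |t| * Real.exp |t| := by
  rcases le_or_gt 0 t with h | h
  · rw [abs_of_nonneg h, abs_of_nonneg (sub_nonneg.2 (Real.one_le_exp h))]
    have hmul : Real.exp (-t) * Real.exp t = 1 := by rw [← Real.exp_add]; simp
    have h2 := mul_le_mul_of_nonneg_right (Real.add_one_le_exp (-t)) (Real.exp_pos t).le
    nlinarith [Real.exp_pos t]
  · have h1 : Real.exp t < 1 := Real.exp_lt_one_iff.2 h
    rw [abs_of_nonpos h.le, abs_of_nonpos (by linarith)]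
    nlinarith [Real.add_one_le_exp t, Real.one_le_exp (neg_nonneg.2 h.le)]

lemma aux_key (a b s : ℝ) (hs : |a - b| ≤ s) :
    |Real.exp (-a) - Real.exp (-b)| ≤ Real.exp (-b) * (s * Real.exp s) := by
  have hs0 : 0 ≤ s := (abs_nonneg _).trans hs
  have h1 : Real.exp (-a) - Real.exp (-b) = Real.exp (-b) * (Real.exp (b - a) - 1) := by
    rw [mul_sub, mul_one, ← Real.exp_add]; ring_nf
  rw [h1, abs_mul, abs_of_pos (Real.exp_pos _)]
  refine mul_le_mul_of_nonneg_left ?_ (Real.exp_pos _).le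
  calc |Real.exp (b - a) - 1| ≤ |b - a| * Real.exp |b - a| := aux_abs_exp_sub_one _
    _ ≤ s * Real.exp s := by
        have : |b - a| ≤ s := by rwa [abs_sub_comm]
        exact mul_le_mul this (Real.exp_le_exp.2 this) (Real.exp_pos _).le hs0

/-- Lipschitz-type continuity of the expected reward in the parameter vector: if the reward
has conditional density `e^{−f(r, θ)}` in `r ∈ [−R_max, R_max]` with `|∂f/∂θ| ≤ σ₂`, then for
covariates with `‖x‖_∞ ≤ x_max`,
`|E[R | x, β₁] − E[R | x, β₂]| ≤ R_max e^{σ₂ x_max ‖β₁−β₂‖₁} σ₂ x_max ‖β₁−β₂‖₁`. -/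
theorem stmt_13 (d : ℕ) (f : ℝ → ℝ → ℝ) (σ2 Rmax xmax : ℝ)
    (hRmax : 0 < Rmax) (hσ2 : 0 < σ2) (hxmax : 0 < xmax)
    (hcont : Continuous fun p : ℝ × ℝ => f p.1 p.2)
    (hdiff : ∀ r : ℝ, Differentiable ℝ (f r))
    (hderiv : ∀ r θ : ℝ, |deriv (f r) θ| ≤ σ2)
    (hdensity : ∀ θ : ℝ, ∫ r in Set.Icc (-Rmax) Rmax, Real.exp (-(f r θ)) = 1)
    (x β₁ β₂ : Fin d → ℝ) (hx : ∀ i, |x i| ≤ xmax) :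
    |(∫ r in Set.Icc (-Rmax) Rmax, r * Real.exp (-(f r (∑ i, x i * β₁ i)))) -
        ∫ r in Set.Icc (-Rmax) Rmax, r * Real.exp (-(f r (∑ i, x i * β₂ i)))| ≤
      Rmax * Real.exp (σ2 * xmax * ∑ i, |β₁ i - β₂ i|) *
        (σ2 * xmax * ∑ i, |β₁ i - β₂ i|) := by
  set θ₁ := ∑ i, x i * β₁ i with hθ₁
  set θ₂ := ∑ i, x i * β₂ i with hθ₂
  set s := σ2 * xmax * ∑ i, |β₁ i - β₂ i| with hs_def
  have hsum0 : (0:ℝ) ≤ ∑ i, |β₁ i - β₂ i| :=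
    Finset.sum_nonneg fun i _ => abs_nonneg _
  have hs0 : 0 ≤ s := by positivity
  -- |θ₁ - θ₂| ≤ xmax * ∑ |β₁ i - β₂ i|
  have hθd : |θ₁ - θ₂| ≤ xmax * ∑ i, |β₁ i - β₂ i| := by
    have he : θ₁ - θ₂ = ∑ i, x i * (β₁ i - β₂ i) := by
      rw [hθ₁, hθ₂, ← Finset.sum_sub_distrib]
      exact Finset.sum_congr rfl fun i _ => (mul_sub _ _ _).symm
    rw [he, Finset.mul_sum]
    refine (Finset.abs_sum_le_sum_abs _ _).trans (Finset.sum_le_sum fun i _ => ?_)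
    rw [abs_mul]
    exact mul_le_mul_of_nonneg_right (hx i) (abs_nonneg _)
  -- Lipschitz bound via MVT
  have hlip : ∀ r, |f r θ₁ - f r θ₂| ≤ s := by
    intro r
    have hL := lipschitzWith_of_nnnorm_deriv_le (hdiff r) (fun θ => by
      rw [← NNReal.coe_le_coe, coe_nnnorm, Real.norm_eq_abs, Real.coe_toNNReal _ hσ2.le]
      exact hderiv r θ)
    have := hL.dist_le_mul θ₁ θ₂
    rw [Real.dist_eq, Real.dist_eq, Real.coe_toNNReal _ hσ2.le] at this
    calc |f r θ₁ - f r θ₂| ≤ σ2 * |θ₁ - θ₂| := this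
      _ ≤ σ2 * (xmax * ∑ i, |β₁ i - β₂ i|) := by
          exact mul_le_mul_of_nonneg_left hθd hσ2.le
      _ = s := by rw [hs_def]; ring
  -- continuity / integrability
  have hcθ : ∀ θ : ℝ, Continuous fun r => Real.exp (-(f r θ)) := fun θ =>
    Real.continuous_exp.comp ((hcont.comp (continuous_id.prodMk continuous_const)).neg)
  have hint : ∀ θ : ℝ, IntegrableOn (fun r => r * Real.exp (-(f r θ)))
      (Set.Icc (-Rmax) Rmax) := fun θ =>
    (continuous_id.mul (hcθ θ)).integrableOn_Icc
  have hintB : IntegrableOn (fun r => Rmax * (Real.exp (-(f r θ₂)) * (s * Real.exp s)))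
      (Set.Icc (-Rmax) Rmax) :=
    ((continuous_const.mul ((hcθ θ₂).mul continuous_const))).integrableOn_Icc
  rw [← integral_sub (hint θ₁) (hint θ₂)]
  have hbound : ∀ᵐ r ∂(volume.restrict (Set.Icc (-Rmax) Rmax)),
      ‖r * Real.exp (-(f r θ₁)) - r * Real.exp (-(f r θ₂))‖ ≤
        Rmax * (Real.exp (-(f r θ₂)) * (s * Real.exp s)) := by
    filter_upwards [ae_restrict_mem measurableSet_Icc] with r hr
    have hr' : |r| ≤ Rmax := abs_le.2 ⟨hr.1, hr.2⟩
    rw [Real.norm_eq_abs, ← mul_sub, abs_mul]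
    exact mul_le_mul hr' (aux_key _ _ _ (hlip r)) (abs_nonneg _) hRmax.le
  calc ‖∫ r in Set.Icc (-Rmax) Rmax,
        (r * Real.exp (-(f r θ₁)) - r * Real.exp (-(f r θ₂)))‖
      ≤ ∫ r in Set.Icc (-Rmax) Rmax,
          Rmax * (Real.exp (-(f r θ₂)) * (s * Real.exp s)) :=
        norm_integral_le_of_norm_le hintB hbound
    _ = Rmax * (s * Real.exp s) * ∫ r in Set.Icc (-Rmax) Rmax, Real.exp (-(f r θ₂)) := by
        rw [← integral_const_mul]
        exact integral_congr_ae (Filter.Eventually.of_forall fun r => by ring)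
    _ = Rmax * (s * Real.exp s) := by rw [hdensity θ₂, mul_one]
    _ = Rmax * Real.exp s * s := by ring
end
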